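/- The 2n Gibbons-Hermsen Hamiltonians Î_1, …, Î_n and Î^{(2)}_0, …, Î^{(2)}_{n−1} pairwise Poisson-commute with respect to the canonical Poisson bracket on V; indeed for all integers k, k' ≥ 1 and ℓ, ℓ' ≥ 0 one has {Î_k, Î_{k'}} = 0, {Î_k, Î^{(2)}_ℓ} = 0, and {Î^{(2)}_ℓ, Î^{(2)}_{ℓ'}} = 0 identically on V. -/

import Mathlib

attribute [local instance] Matrix.normedAddCommGroup Matrix.normedSpace

/-- The space `V = Mat_n(ℝ) × Mat_n(ℝ) × Mat_{n×2}(ℝ) × Mat_{2×n}(ℝ)`. -/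
abbrev VV (n : ℕ) := Matrix (Fin n) (Fin n) ℝ × Matrix (Fin n) (Fin n) ℝ ×
  Matrix (Fin n) (Fin 2) ℝ × Matrix (Fin 2) (Fin n) ℝ

/-- The gradient matrix `∇_X f`. -/
noncomputable def gradX {n : ℕ} (f : VV n → ℝ) (p : VV n) : Matrix (Fin n) (Fin n) ℝ :=
  fun i j => fderiv ℝ f p (Matrix.single j i 1, 0, 0, 0)

/-- The gradient matrix `∇_Y f`. -/
noncomputable def gradY {n : ℕ} (f : VV n → ℝ) (p : VV n) : Matrix (Fin n) (Fin n) ℝ :=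
  fun i j => fderiv ℝ f p (0, Matrix.single j i 1, 0, 0)

/-- The gradient matrix `∇_v f ∈ Mat_{2×n}(ℝ)`. -/
noncomputable def gradv {n : ℕ} (f : VV n → ℝ) (p : VV n) : Matrix (Fin 2) (Fin n) ℝ :=
  fun i j => fderiv ℝ f p (0, 0, Matrix.single j i 1, 0)

/-- The gradient matrix `∇_w f ∈ Mat_{n×2}(ℝ)`. -/
noncomputable def gradw {n : ℕ} (f : VV n → ℝ) (p : VV n) : Matrix (Fin n) (Fin 2) ℝ :=
  fun i j => fderiv ℝ f p (0, 0, 0, Matrix.single j i 1)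

/-- The canonical Poisson bracket on `V`:
`{f,g} = tr(∇_Y f ∇_X g − ∇_Y g ∇_X f) + tr(∇_w f ∇_v g − ∇_w g ∇_v f)`. -/
noncomputable def cbracket {n : ℕ} (f g : VV n → ℝ) (p : VV n) : ℝ :=
  (gradY f p * gradX g p - gradY g p * gradX f p).trace +
  (gradw f p * gradv g p - gradw g p * gradv f p).trace

/-- The Gibbons-Hermsen Hamiltonian `Ĥ_{k,α}(X,Y,v,w) = tr(X^k v α w)`. -/
noncomputable def Hhat {n : ℕ} (k : ℕ) (α : Matrix (Fin 2) (Fin 2) ℝ) (p : VV n) : ℝ :=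
  (p.1 ^ k * p.2.2.1 * α * p.2.2.2).trace

/-- The Gibbons-Hermsen Hamiltonian `Î_k(X,Y,v,w) = (1/k) tr(X^k)`. -/
noncomputable def Ihat {n : ℕ} (k : ℕ) (p : VV n) : ℝ := (1 / (k : ℝ)) * (p.1 ^ k).trace

/-- The matrix `η = diag(−1, 1)`. -/
noncomputable def etaMat : Matrix (Fin 2) (Fin 2) ℝ := Matrix.diagonal ![-1, 1]

/-- The Gibbons-Hermsen Hamiltonian `Î^{(2)}_ℓ(X,Y,v,w) = tr(X^ℓ v η w)`. -/
noncomputable def Ihat2 {n : ℕ} (l : ℕ) (p : VV n) : ℝ :=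
  (p.1 ^ l * p.2.2.1 * etaMat * p.2.2.2).trace


section Aux

variable {ι κ σ : Type*} [Fintype ι] [Fintype κ] [Fintype σ]

/-- Matrix multiplication as a continuous bilinear map. -/
noncomputable def matmulCLM : Matrix ι κ ℝ →L[ℝ] Matrix κ σ ℝ →L[ℝ] Matrix ι σ ℝ :=
  LinearMap.toContinuousLinearMap
    { toFun := fun A => LinearMap.toContinuousLinearMap
        { toFun := fun B => A * B
          map_add' := fun B C => Matrix.mul_add A B C
          map_smul' := fun c B => (Matrix.mul_smul A c B) }
      map_add' := fun A B => by ext C i j; simp [Matrix.add_mul]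
      map_smul' := fun c A => by ext C i j; simp [Matrix.smul_mul] }

@[simp] lemma matmulCLM_apply (A : Matrix ι κ ℝ) (B : Matrix κ σ ℝ) :
    matmulCLM A B = A * B := rfl

/-- Trace as a continuous linear map. -/
noncomputable def traceCLM : Matrix ι ι ℝ →L[ℝ] ℝ :=
  LinearMap.toContinuousLinearMap (Matrix.traceLinearMap ι ℝ ℝ)

@[simp] lemma traceCLM_apply (A : Matrix ι ι ℝ) : traceCLM A = A.trace := rfl

variable {E : Type*} [NormedAddCommGroup E] [NormedSpace ℝ E]

theorem HasFDerivAt.matmul {f : E → Matrix ι κ ℝ} {g : E → Matrix κ σ ℝ}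
    {f' : E →L[ℝ] Matrix ι κ ℝ} {g' : E →L[ℝ] Matrix κ σ ℝ} {x : E}
    (hf : HasFDerivAt f f' x) (hg : HasFDerivAt g g' x) :
    HasFDerivAt (fun x => f x * g x)
      ((matmulCLM : Matrix ι κ ℝ →L[ℝ] _).precompR E (f x) g'
        + (matmulCLM : Matrix ι κ ℝ →L[ℝ] _).precompL E f' (g x)) x :=
  (matmulCLM : Matrix ι κ ℝ →L[ℝ] Matrix κ σ ℝ →L[ℝ] Matrix ι σ ℝ).hasFDerivAt_of_bilinear hf hg

theorem Differentiable.matmul {f : E → Matrix ι κ ℝ} {g : E → Matrix κ σ ℝ}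
    (hf : Differentiable ℝ f) (hg : Differentiable ℝ g) :
    Differentiable ℝ (fun x => f x * g x) := fun x =>
  (((hf x).hasFDerivAt).matmul ((hg x).hasFDerivAt)).differentiableAt

theorem differentiable_pow_matrix [DecidableEq ι] (l : ℕ) :
    Differentiable ℝ (fun X : Matrix ι ι ℝ => X ^ l) := by
  induction l with
  | zero => simpa using differentiable_const (1 : Matrix ι ι ℝ)
  | succ m ih =>
    rw [show (fun X : Matrix ι ι ℝ => X ^ (m+1)) = fun X => X ^ m * X from funext fun X => pow_succ X m]
    exact ih.matmul differentiable_id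

end Aux

noncomputable def XL (n : ℕ) : VV n →L[ℝ] Matrix (Fin n) (Fin n) ℝ :=
  ContinuousLinearMap.fst ℝ _ _

noncomputable def vL (n : ℕ) : VV n →L[ℝ] Matrix (Fin n) (Fin 2) ℝ :=
  (ContinuousLinearMap.fst ℝ (Matrix (Fin n) (Fin 2) ℝ) (Matrix (Fin 2) (Fin n) ℝ)).comp
    ((ContinuousLinearMap.snd ℝ (Matrix (Fin n) (Fin n) ℝ)
        (Matrix (Fin n) (Fin 2) ℝ × Matrix (Fin 2) (Fin n) ℝ)).comp
      (ContinuousLinearMap.snd ℝ (Matrix (Fin n) (Fin n) ℝ)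
        (Matrix (Fin n) (Fin n) ℝ × Matrix (Fin n) (Fin 2) ℝ × Matrix (Fin 2) (Fin n) ℝ)))

noncomputable def wL (n : ℕ) : VV n →L[ℝ] Matrix (Fin 2) (Fin n) ℝ :=
  (ContinuousLinearMap.snd ℝ (Matrix (Fin n) (Fin 2) ℝ) (Matrix (Fin 2) (Fin n) ℝ)).comp
    ((ContinuousLinearMap.snd ℝ (Matrix (Fin n) (Fin n) ℝ)
        (Matrix (Fin n) (Fin 2) ℝ × Matrix (Fin 2) (Fin n) ℝ)).comp
      (ContinuousLinearMap.snd ℝ (Matrix (Fin n) (Fin n) ℝ)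
        (Matrix (Fin n) (Fin n) ℝ × Matrix (Fin n) (Fin 2) ℝ × Matrix (Fin 2) (Fin n) ℝ)))

@[simp] lemma XL_apply (n : ℕ) (p : VV n) : XL n p = p.1 := rfl
@[simp] lemma vL_apply (n : ℕ) (p : VV n) : vL n p = p.2.2.1 := rfl
@[simp] lemma wL_apply (n : ℕ) (p : VV n) : wL n p = p.2.2.2 := rfl

lemma fderiv_Ihat2_apply {n : ℕ} (l : ℕ) (p u : VV n) (hu : u.1 = 0) :
    fderiv ℝ (Ihat2 l) p u =
      (p.1 ^ l * u.2.2.1 * etaMat * p.2.2.2).trace +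
      (p.1 ^ l * p.2.2.1 * etaMat * u.2.2.2).trace := by
  have hX : HasFDerivAt (fun p : VV n => p.1) (XL n) p := (XL n).hasFDerivAt
  have hpow : HasFDerivAt (fun p : VV n => p.1 ^ l)
      ((fderiv ℝ (fun X : Matrix (Fin n) (Fin n) ℝ => X ^ l) p.1).comp (XL n)) p :=
    ((differentiable_pow_matrix l p.1).hasFDerivAt).comp p hX
  have hv : HasFDerivAt (fun p : VV n => p.2.2.1) (vL n) p := (vL n).hasFDerivAt
  have hw : HasFDerivAt (fun p : VV n => p.2.2.2) (wL n) p := (wL n).hasFDerivAt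
  have hc : HasFDerivAt (fun _ : VV n => etaMat)
      (0 : VV n →L[ℝ] Matrix (Fin 2) (Fin 2) ℝ) p := hasFDerivAt_const _ _
  have hM := ((hpow.matmul hv).matmul hc).matmul hw
  have hF := (traceCLM.hasFDerivAt (x := p.1 ^ l * p.2.2.1 * etaMat * p.2.2.2)).comp p hM
  have he : fderiv ℝ (Ihat2 l) p = _ := hF.fderiv
  rw [he]
  have key : (fderiv ℝ (fun X : Matrix (Fin n) (Fin n) ℝ => X ^ l) p.1) (XL n u) = 0 := by
    simp [hu]
  change Matrix.trace ((p.1 ^ l * p.2.2.1 * etaMat) * u.2.2.2 + ((p.1 ^ l * p.2.2.1) * (0 : Matrix (Fin 2) (Fin 2) ℝ) +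
    ((p.1 ^ l * u.2.2.1) + (fderiv ℝ (fun X : Matrix (Fin n) (Fin n) ℝ => X ^ l) p.1) (XL n u)
      * p.2.2.1) * etaMat) * p.2.2.2) = _
  rw [key]
  simp only [Matrix.mul_zero, Matrix.zero_mul, zero_add, add_zero, Matrix.trace_add]
  ring

lemma fderiv_Ihat_apply {n : ℕ} (k : ℕ) (p u : VV n) (hu : u.1 = 0) :
    fderiv ℝ (Ihat k) p u = 0 := by
  have hX : HasFDerivAt (fun p : VV n => p.1) (XL n) p := (XL n).hasFDerivAt
  have hpow : HasFDerivAt (fun p : VV n => p.1 ^ k)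
      ((fderiv ℝ (fun X : Matrix (Fin n) (Fin n) ℝ => X ^ k) p.1).comp (XL n)) p :=
    ((differentiable_pow_matrix k p.1).hasFDerivAt).comp p hX
  have htr := (traceCLM.hasFDerivAt (x := p.1 ^ k)).comp p hpow
  have hF := htr.const_mul (1 / (k : ℝ))
  have he : fderiv ℝ (Ihat k) p = _ := hF.fderiv
  rw [he]
  change (1 / (k : ℝ)) * Matrix.trace
    ((fderiv ℝ (fun X : Matrix (Fin n) (Fin n) ℝ => X ^ k) p.1) (XL n u)) = 0
  simp [hu]

lemma trace_mul_stdBasisMatrix {ι κ : Type*} [Fintype ι] [Fintype κ] [DecidableEq ι]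
    [DecidableEq κ] (M : Matrix ι κ ℝ) (j : κ) (i : ι) :
    (M * Matrix.single j i (1:ℝ)).trace = M i j := by
  simp only [Matrix.trace, Matrix.diag, Matrix.mul_apply, Matrix.single,
    Matrix.of_apply, mul_ite, mul_one, mul_zero]
  simp [ite_and, Finset.sum_ite_eq, Finset.sum_ite_eq']

lemma trace_mul_stdBasisMatrix_mul {ι κ σ : Type*} [Fintype ι] [Fintype κ] [Fintype σ]
    [DecidableEq κ] [DecidableEq σ] (A : Matrix ι κ ℝ) (B : Matrix σ ι ℝ) (j : κ) (i : σ) :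
    (A * Matrix.single j i (1:ℝ) * B).trace = (B * A) i j := by
  rw [Matrix.trace_mul_comm, ← Matrix.mul_assoc, trace_mul_stdBasisMatrix]

lemma etaMat_mul_etaMat : etaMat * etaMat = 1 := by
  ext i j
  fin_cases i <;> fin_cases j <;>
    simp [etaMat, Matrix.mul_apply, Fin.sum_univ_two, Matrix.one_apply]

lemma gradY_Ihat {n : ℕ} (k : ℕ) (p : VV n) : gradY (Ihat k) p = 0 := by
  funext i j
  exact fderiv_Ihat_apply k p _ rfl

lemma gradv_Ihat {n : ℕ} (k : ℕ) (p : VV n) : gradv (Ihat k) p = 0 := by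
  funext i j
  exact fderiv_Ihat_apply k p _ rfl

lemma gradw_Ihat {n : ℕ} (k : ℕ) (p : VV n) : gradw (Ihat k) p = 0 := by
  funext i j
  exact fderiv_Ihat_apply k p _ rfl

lemma gradY_Ihat2 {n : ℕ} (l : ℕ) (p : VV n) : gradY (Ihat2 l) p = 0 := by
  funext i j
  show fderiv ℝ (Ihat2 l) p (0, Matrix.single j i 1, 0, 0) = 0
  rw [fderiv_Ihat2_apply l p _ rfl]
  simp

lemma gradv_Ihat2 {n : ℕ} (l : ℕ) (p : VV n) :
    gradv (Ihat2 l) p = etaMat * p.2.2.2 * p.1 ^ l := by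
  funext i j
  show fderiv ℝ (Ihat2 l) p (0, 0, Matrix.single j i 1, 0)
    = (etaMat * p.2.2.2 * p.1 ^ l) i j
  rw [fderiv_Ihat2_apply l p _ rfl]
  simp only [Matrix.mul_zero, Matrix.trace_zero, add_zero]
  rw [Matrix.mul_assoc (p.1 ^ l * Matrix.single j i 1) etaMat p.2.2.2,
    trace_mul_stdBasisMatrix_mul]

lemma gradw_Ihat2 {n : ℕ} (l : ℕ) (p : VV n) :
    gradw (Ihat2 l) p = p.1 ^ l * p.2.2.1 * etaMat := by
  funext i j
  show fderiv ℝ (Ihat2 l) p (0, 0, 0, Matrix.single j i 1)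
    = (p.1 ^ l * p.2.2.1 * etaMat) i j
  rw [fderiv_Ihat2_apply l p _ rfl]
  simp only [Matrix.mul_zero, Matrix.zero_mul, Matrix.trace_zero, zero_add]
  rw [trace_mul_stdBasisMatrix]

lemma key_trace {n : ℕ} (X : Matrix (Fin n) (Fin n) ℝ) (v : Matrix (Fin n) (Fin 2) ℝ)
    (w : Matrix (Fin 2) (Fin n) ℝ) (a b : ℕ) :
    ((X ^ a * v * etaMat) * (etaMat * w * X ^ b)).trace
      = (v * (w * X ^ (a + b))).trace := by
  have h : (X ^ a * v * etaMat) * (etaMat * w * X ^ b) = X ^ a * (v * (w * X ^ b)) := by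
    simp only [Matrix.mul_assoc]
    rw [← Matrix.mul_assoc etaMat etaMat, etaMat_mul_etaMat, Matrix.one_mul]
  rw [h, Matrix.trace_mul_comm]
  simp only [Matrix.mul_assoc]
  rw [← pow_add, add_comm b a]

/-- The Hamiltonians `Î_1, …, Î_n` and `Î^{(2)}_0, …, Î^{(2)}_{n−1}` pairwise
Poisson-commute with respect to the canonical bracket on `V`. -/
theorem GH_hamiltonians_commute (n : ℕ) (hn : 1 ≤ n) :
    (∀ k k' : ℕ, 1 ≤ k → 1 ≤ k' → ∀ p : VV n, cbracket (Ihat k) (Ihat k') p = 0) ∧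
    (∀ k l : ℕ, 1 ≤ k → ∀ p : VV n, cbracket (Ihat k) (Ihat2 l) p = 0) ∧
    (∀ l l' : ℕ, ∀ p : VV n, cbracket (Ihat2 l) (Ihat2 l') p = 0) := by
  refine ⟨fun k k' _ _ p => ?_, fun k l _ p => ?_, fun l l' p => ?_⟩
  · simp [cbracket, gradY_Ihat, gradv_Ihat, gradw_Ihat]
  · simp [cbracket, gradY_Ihat, gradv_Ihat, gradw_Ihat, gradY_Ihat2]
  · simp only [cbracket, gradY_Ihat2, Matrix.zero_mul, sub_zero, Matrix.trace_zero,
      zero_add, sub_self, gradv_Ihat2, gradw_Ihat2]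
    rw [Matrix.trace_sub, key_trace, key_trace, add_comm l' l, sub_self]
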